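/- arXiv:2509.14599 — 4 statements merged into one kernel-verified Lean document; each statement's English description precedes it below -/
import Mathlib

section
/- Let K ⊆ ℝ be a real quadratic number field and (A_n)_{n≥0} a sequence of irrational elements of K with continued fraction expansions A_n = [a_0(A_n); a_1(A_n), a_2(A_n), …]. Suppose that for every i ≥ 1 one has lim_{n→∞} (log a_i(A_n))/n = 0, and suppose that the limit lim_{n→∞} (log|A_n − A_n′|)/n exists and is strictly positive. Then the sequence (ℓ(A_n))_{n≥0} of period lengths is unbounded. -/
open Polynomial Filter

/-- The Gauss map used to generate the continued fraction expansion of a real number. -/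
noncomputable def cfMap (x : ℝ) : ℝ := if Int.fract x = 0 then 0 else (Int.fract x)⁻¹

/-- The `i`-th partial quotient `a_i(x)` of the continued fraction expansion of `x`. -/
noncomputable def cfa (x : ℝ) (i : ℕ) : ℤ := ⌊cfMap^[i] x⌋

/-- The minimal eventual period length `ℓ(x)` of the continued fraction expansion of `x`,
with the convention `ℓ(x) = 0` for rational `x`. -/
noncomputable def periodLength (x : ℝ) : ℕ :=
  open scoped Classical in
  if Irrational x then sInf {p : ℕ | 0 < p ∧ ∃ N : ℕ, ∀ n ≥ N, cfa x (n + p) = cfa x n} else 0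

/-!
Run the continued fraction algorithm of `x = A n` simultaneously on its conjugate `y`, using the
partial quotients of `x`: this produces the complete quotients of `x` together with their
conjugates. When `|x - y| > 1` the conjugates lie in `(-1, 0)` from index `3` on. Such reduced
pairs satisfy integer quadratics with bounded coefficients, so the expansion is eventually periodic
(Lagrange), and the reduced pairs determine their predecessors, so it is purely periodic from
index `3` on (Galois). If `ℓ` is the period, the complete quotient at index `3` is a fixed point of
the Möbius map of `M = ∏_{j < ℓ} [[a_{3+j}, 1], [1, 0]]`; its fixed-point quadratic has
discriminant `(tr M)² ∓ 4`, and carried back to index `0` it gives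
`|x - y| ≤ 2 ∏_{j < ℓ} (a_{3+j} + 1) + 2`. If all `ℓ(A n) ≤ C`, then `log |A n - A n'| / n` is
bounded by a quantity tending to `0` by the hypothesis on the partial quotients, contradicting the
positive limit.
-/

section GaussMap

variable {x y : ℝ}

lemma cfMap_of_irrational (hx : Irrational x) : cfMap x = (x - ⌊x⌋)⁻¹ := by
  rw [cfMap, if_neg (Int.fract_pos.mpr (hx.ne_int _)).ne', Int.fract]

lemma irrational_cfMap (hx : Irrational x) : Irrational (cfMap x) := by
  rw [cfMap_of_irrational hx]
  exact (hx.sub_intCast _).inv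

lemma irrational_iterate_cfMap (hx : Irrational x) (n : ℕ) : Irrational (cfMap^[n] x) := by
  induction n with
  | zero => exact hx
  | succ n ih => rw [Function.iterate_succ_apply']; exact irrational_cfMap ih

lemma one_lt_cfMap (hx : Irrational x) : 1 < cfMap x := by
  rw [cfMap_of_irrational hx, ← Int.fract]
  exact one_lt_inv₀ (Int.fract_pos.mpr (hx.ne_int _)) |>.mpr (Int.fract_lt_one x)

lemma one_le_floor_cfMap (hx : Irrational x) : 1 ≤ ⌊cfMap x⌋ :=
  Int.le_floor.mpr (by exact_mod_cast (one_lt_cfMap hx).le)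

lemma floor_add_inv_cfMap (hx : Irrational x) : ⌊x⌋ + (cfMap x)⁻¹ = x := by
  rw [cfMap_of_irrational hx, inv_inv]; ring

lemma cfa_iterate_cfMap (m i : ℕ) : cfa (cfMap^[m] x) i = cfa x (i + m) := by
  rw [cfa, cfa, Function.iterate_add_apply]

lemma one_le_cfa (hx : Irrational x) {i : ℕ} (hi : 0 < i) : 1 ≤ cfa x i := by
  obtain ⟨j, rfl⟩ := Nat.exists_eq_add_of_lt hi
  rw [cfa, zero_add, Function.iterate_succ_apply']
  exact one_le_floor_cfMap (irrational_iterate_cfMap hx j)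

lemma abs_sub_eq_of_floor_eq (hx : Irrational x) (hy : Irrational y) (h : ⌊x⌋ = ⌊y⌋) :
    |x - y| = |cfMap x - cfMap y| / (cfMap x * cfMap y) := by
  have hx' := one_lt_cfMap hx
  have hy' := one_lt_cfMap hy
  conv_lhs => rw [← floor_add_inv_cfMap hx, ← floor_add_inv_cfMap hy, h]
  rw [add_sub_add_left_eq_sub, inv_sub_inv (by positivity) (by positivity), abs_div,
    abs_sub_comm, abs_of_pos (by positivity : 0 < cfMap x * cfMap y)]

lemma two_lt_cfMap_mul_cfMap (hx : Irrational x) : 2 < cfMap x * cfMap (cfMap x) := by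
  have hfloor : (1 : ℝ) ≤ ⌊cfMap x⌋ := by exact_mod_cast one_le_floor_cfMap hx
  have hgt := one_lt_cfMap (irrational_cfMap hx)
  have hsplit : cfMap x * cfMap (cfMap x) = ⌊cfMap x⌋ * cfMap (cfMap x) + 1 := by
    nth_rw 1 [← floor_add_inv_cfMap (irrational_cfMap hx)]
    rw [add_mul, inv_mul_cancel₀ (by positivity)]
  nlinarith

/-- Two equal partial quotients contract the distance by a factor `4`. -/
lemma abs_sub_le_of_cfa_eq (hx : Irrational x) (hy : Irrational y) (h : ∀ i, cfa x i = cfa y i)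
    (k : ℕ) : |x - y| ≤ (1 / 4) ^ k := by
  induction k generalizing x y with
  | zero => simpa using (Int.abs_sub_lt_one_of_floor_eq_floor (h 0)).le
  | succ k ih =>
    have hx' := irrational_cfMap hx
    have hy' := irrational_cfMap hy
    have hfloor₀ : ⌊x⌋ = ⌊y⌋ := h 0
    have hfloor₁ : ⌊cfMap x⌋ = ⌊cfMap y⌋ := h 1
    have htail := ih (irrational_iterate_cfMap hx 2) (irrational_iterate_cfMap hy 2)
      (fun i => by rw [cfa_iterate_cfMap, cfa_iterate_cfMap, h])
    have hD : 4 ≤ cfMap (cfMap x) * cfMap (cfMap y) * (cfMap x * cfMap y) := by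
      nlinarith [two_lt_cfMap_mul_cfMap hx, two_lt_cfMap_mul_cfMap hy]
    rw [abs_sub_eq_of_floor_eq hx hy hfloor₀, abs_sub_eq_of_floor_eq hx' hy' hfloor₁, div_div,
      div_le_iff₀ (by positivity), pow_succ]
    simp only [Function.iterate_succ, Function.iterate_zero, Function.comp_apply, id] at htail
    nlinarith [pow_pos (by norm_num : (0:ℝ) < 1/4) k]

lemma eq_of_cfa_eq (hx : Irrational x) (hy : Irrational y) (h : ∀ i, cfa x i = cfa y i) :
    x = y := by
  have hlim := tendsto_pow_atTop_nhds_zero_of_lt_one (r := (1 / 4 : ℝ)) (by norm_num) (by norm_num)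
  have := ge_of_tendsto' hlim (abs_sub_le_of_cfa_eq hx hy h)
  exact sub_eq_zero.mp (abs_nonpos_iff.mp this)

end GaussMap

section Quadratic

def quadEval (q : ℤ × ℤ × ℤ) (z : ℝ) : ℝ := q.1 * z ^ 2 + q.2.1 * z + q.2.2

def quadDisc (q : ℤ × ℤ × ℤ) : ℤ := discrim q.1 q.2.1 q.2.2

/-- The quadratic satisfied by `w` when `q` is satisfied by `a + w⁻¹`. -/
def quadUp (a : ℤ) (q : ℤ × ℤ × ℤ) : ℤ × ℤ × ℤ :=
  (q.1 * a ^ 2 + q.2.1 * a + q.2.2, 2 * q.1 * a + q.2.1, q.1)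

def quadDown (a : ℤ) (q : ℤ × ℤ × ℤ) : ℤ × ℤ × ℤ :=
  (q.2.2, q.2.1 - 2 * a * q.2.2, q.1 - a * q.2.1 + a ^ 2 * q.2.2)

variable {q : ℤ × ℤ × ℤ}

lemma quadEval_quadUp {w : ℝ} (hw : w ≠ 0) (a : ℤ) (q : ℤ × ℤ × ℤ) :
    quadEval (quadUp a q) w = w ^ 2 * quadEval q (a + w⁻¹) := by
  simp only [quadEval, quadUp]
  push_cast
  field_simp
  ring

lemma quadUp_quadDown (a : ℤ) (q : ℤ × ℤ × ℤ) : quadUp a (quadDown a q) = q := by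
  simp only [quadUp, quadDown]
  ext <;> dsimp only <;> ring

lemma quadDisc_quadUp (a : ℤ) (q : ℤ × ℤ × ℤ) : quadDisc (quadUp a q) = quadDisc q := by
  simp only [quadDisc, quadUp, discrim]
  ring

lemma quadDisc_quadDown (a : ℤ) (q : ℤ × ℤ × ℤ) : quadDisc (quadDown a q) = quadDisc q := by
  rw [← quadDisc_quadUp a, quadUp_quadDown]

lemma quadUp_ne_zero (a : ℤ) (hq : q ≠ 0) : quadUp a q ≠ 0 := by
  intro h
  simp only [quadUp, Prod.mk_eq_zero] at h
  obtain ⟨h₁, h₂, h₃⟩ := h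
  refine hq (Prod.ext h₃ (Prod.ext ?_ ?_)) <;> simp only [Prod.fst_zero, Prod.snd_zero]
  · linear_combination h₂ - 2 * a * h₃
  · linear_combination h₁ - a * h₂ + a ^ 2 * h₃

lemma quadDown_ne_zero (a : ℤ) (hq : q ≠ 0) : quadDown a q ≠ 0 := by
  intro h
  apply hq
  rw [← quadUp_quadDown a q, h]
  simp [quadUp]

lemma eq_zero_of_quadEval_eq_zero {z : ℝ} (hz : Irrational z) (h : quadEval q z = 0)
    (h₁ : q.1 = 0) : q = 0 := by
  simp only [quadEval, h₁, Int.cast_zero, zero_mul, zero_add] at h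
  have h₂ : q.2.1 = 0 := by
    by_contra hB
    exact ((hz.intCast_mul hB).add_intCast q.2.2).ne_int 0 (by simpa using h)
  have h₃ : q.2.2 = 0 := by simpa [h₂] using h
  exact Prod.ext h₁ (Prod.ext h₂ h₃)

/-- `p.2` is the algebraic conjugate of the quadratic irrational `p.1`, with common minimal
quadratic (up to scaling) `q`. -/
structure IsConjRoots (q : ℤ × ℤ × ℤ) (p : ℝ × ℝ) : Prop where
  irrational : Irrational p.1
  ne : p.1 ≠ p.2
  ne_zero : q ≠ 0
  eval_fst : quadEval q p.1 = 0
  eval_snd : quadEval q p.2 = 0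

namespace IsConjRoots

variable {p : ℝ × ℝ}

lemma leadingCoeff_ne_zero (h : IsConjRoots q p) : q.1 ≠ 0 :=
  fun h₁ => h.ne_zero (eq_zero_of_quadEval_eq_zero h.irrational h.eval_fst h₁)

lemma vieta (h : IsConjRoots q p) :
    q.1 * (p.1 + p.2) = -q.2.1 ∧ q.2.2 = q.1 * (p.1 * p.2) := by
  have e₁ := h.eval_fst
  have e₂ := h.eval_snd
  simp only [quadEval] at e₁ e₂
  have hsum : q.1 * (p.1 + p.2) + q.2.1 = 0 := by
    have : (p.1 - p.2) * (q.1 * (p.1 + p.2) + q.2.1) = 0 := by linear_combination e₁ - e₂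
    exact (mul_eq_zero.mp this).resolve_left (sub_ne_zero.mpr h.ne)
  exact ⟨by linear_combination hsum, by linear_combination e₁ - p.1 * hsum⟩

lemma irrational_snd (h : IsConjRoots q p) : Irrational p.2 := by
  have hA := h.leadingCoeff_ne_zero
  refine Irrational.of_intCast_mul q.1 ?_
  have : (q.1 : ℝ) * p.2 = (-q.2.1 : ℤ) - q.1 * p.1 := by
    push_cast; linear_combination h.vieta.1
  rw [this]
  exact (h.irrational.intCast_mul hA).intCast_sub _

lemma quadDisc_eq (h : IsConjRoots q p) : (quadDisc q : ℝ) = q.1 ^ 2 * (p.1 - p.2) ^ 2 := by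
  obtain ⟨h₁, h₂⟩ := h.vieta
  simp only [quadDisc, discrim]
  push_cast
  rw [h₂, ← neg_neg (q.2.1 : ℝ), ← h₁]
  ring

lemma snd_eq {q' : ℤ × ℤ × ℤ} {p' : ℝ × ℝ} (h : IsConjRoots q p) (h' : IsConjRoots q' p')
    (hp : p.1 = p'.1) : p.2 = p'.2 := by
  have hA := h.leadingCoeff_ne_zero
  have hA' := h'.leadingCoeff_ne_zero
  -- `q'.1 • q - q.1 • q'` is linear and vanishes at the irrational `p.1`
  have hlin : ((0, q'.1 * q.2.1 - q.1 * q'.2.1, q'.1 * q.2.2 - q.1 * q'.2.2) : ℤ × ℤ × ℤ) = 0 := by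
    refine eq_zero_of_quadEval_eq_zero h.irrational ?_ rfl
    have e := h.eval_fst
    have e' := h'.eval_fst
    rw [← hp] at e'
    simp only [quadEval] at e e' ⊢
    push_cast
    linear_combination (q'.1 : ℝ) * e - q.1 * e'
  have hB : (q'.1 : ℝ) * q.2.1 = q.1 * q'.2.1 := by
    have : q'.1 * q.2.1 - q.1 * q'.2.1 = 0 := congrArg (fun r => r.2.1) hlin
    exact_mod_cast sub_eq_zero.mp this
  have hv := h.vieta.1
  have hv' := h'.vieta.1
  rw [← hp] at hv'
  have : (q.1 : ℝ) * q'.1 * (p.2 - p'.2) = 0 := by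
    linear_combination (q'.1 : ℝ) * hv - q.1 * hv' - hB
  simpa [hA, hA', sub_eq_zero] using this

end IsConjRoots

end Quadratic

section ConjugatePair

/-- One step of the continued fraction algorithm of `p.1`, applied with the same partial quotient
to `p.2`: on a quadratic irrational and its conjugate it yields the next complete quotient and its
conjugate. -/
noncomputable def cfPair (p : ℝ × ℝ) : ℝ × ℝ := (cfMap p.1, (p.2 - ⌊p.1⌋)⁻¹)

variable {x y : ℝ} {p : ℝ × ℝ} {q : ℤ × ℤ × ℤ}

lemma fst_iterate_cfPair (p : ℝ × ℝ) (n : ℕ) : (cfPair^[n] p).1 = cfMap^[n] p.1 :=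
  Function.Semiconj.iterate_right (f := Prod.fst) (fun _ => rfl) n p

lemma floor_fst_iterate_cfPair (x y : ℝ) (n : ℕ) : ⌊(cfPair^[n] (x, y)).1⌋ = cfa x n := by
  rw [fst_iterate_cfPair]; rfl

lemma floor_add_inv_snd_cfPair (p : ℝ × ℝ) : ⌊p.1⌋ + (cfPair p).2⁻¹ = p.2 := by
  simp [cfPair]

namespace IsConjRoots

lemma step (h : IsConjRoots q p) : IsConjRoots (quadUp ⌊p.1⌋ q) (cfPair p) := by
  have hu : p.2 - ⌊p.1⌋ ≠ 0 := sub_ne_zero.mpr (h.irrational_snd.ne_int _)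
  refine ⟨irrational_cfMap h.irrational, ?_, quadUp_ne_zero _ h.ne_zero, ?_, ?_⟩
  · change cfMap p.1 ≠ (p.2 - ⌊p.1⌋)⁻¹
    rw [cfMap_of_irrational h.irrational, Ne, inv_inj, sub_left_inj]
    exact h.ne
  · rw [cfPair, quadEval_quadUp (zero_lt_one.trans (one_lt_cfMap h.irrational)).ne' ⌊p.1⌋ q,
      floor_add_inv_cfMap h.irrational, h.eval_fst, mul_zero]
  · have hw : (cfPair p).2 ≠ 0 := inv_ne_zero hu
    rw [quadEval_quadUp hw, floor_add_inv_snd_cfPair, h.eval_snd, mul_zero]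

lemma of_step (hp : Irrational p.1) (h : IsConjRoots q (cfPair p)) :
    IsConjRoots (quadDown ⌊p.1⌋ q) p := by
  have eval (z w : ℝ) (hw : w ≠ 0) (hz : ⌊p.1⌋ + w⁻¹ = z) (hq : quadEval q w = 0) :
      quadEval (quadDown ⌊p.1⌋ q) z = 0 := by
    rw [← quadUp_quadDown ⌊p.1⌋ q, quadEval_quadUp hw, hz] at hq
    exact (mul_eq_zero.mp hq).resolve_left (pow_ne_zero 2 hw)
  refine ⟨hp, fun he => h.ne ?_, quadDown_ne_zero _ h.ne_zero, ?_, ?_⟩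
  · simp [cfPair, cfMap_of_irrational hp, ← he]
  · exact eval _ _ h.irrational.ne_zero (floor_add_inv_cfMap hp) h.eval_fst
  · exact eval _ _ h.irrational_snd.ne_zero (floor_add_inv_snd_cfPair p) h.eval_snd

lemma iterate (h : IsConjRoots q p) (n : ℕ) :
    ∃ q', quadDisc q' = quadDisc q ∧ IsConjRoots q' (cfPair^[n] p) := by
  induction n with
  | zero => exact ⟨q, rfl, h⟩
  | succ n ih =>
    obtain ⟨q', hd, h'⟩ := ih
    rw [Function.iterate_succ_apply']
    exact ⟨_, (quadDisc_quadUp _ _).trans hd, h'.step⟩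

lemma of_iterate (hp : Irrational p.1) {n : ℕ} (h : IsConjRoots q (cfPair^[n] p)) :
    ∃ q', quadDisc q' = quadDisc q ∧ IsConjRoots q' p := by
  induction n generalizing p with
  | zero => exact ⟨q, rfl, h⟩
  | succ n ih =>
    rw [Function.iterate_succ_apply] at h
    obtain ⟨q', hd, h'⟩ := ih (irrational_cfMap hp) h
    exact ⟨_, (quadDisc_quadDown _ _).trans hd, h'.of_step hp⟩

end IsConjRoots

lemma snd_cfPair_lt_one (h : 1 < |p.1 - p.2|) : (cfPair p).2 < 1 := by
  have h₀ := Int.floor_le p.1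
  have h₁ := Int.lt_floor_add_one p.1
  rcases lt_abs.mp h with h | h
  · exact (inv_lt_zero.mpr (by linarith)).trans one_pos
  · exact inv_lt_one_of_one_lt₀ (by linarith)

lemma snd_cfPair_neg (h₁ : 1 ≤ ⌊p.1⌋) (h₂ : p.2 < 1) : (cfPair p).2 < 0 := by
  have : (1 : ℝ) ≤ ⌊p.1⌋ := by exact_mod_cast h₁
  exact inv_lt_zero.mpr (by linarith)

lemma snd_cfPair_mem_Ioo (h₁ : 1 ≤ ⌊p.1⌋) (h₂ : p.2 < 0) : (cfPair p).2 ∈ Set.Ioo (-1) 0 := by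
  have : (1 : ℝ) ≤ ⌊p.1⌋ := by exact_mod_cast h₁
  have hw : p.2 - ⌊p.1⌋ < -1 := by linarith
  refine ⟨?_, inv_lt_zero.mpr (by linarith)⟩
  rw [cfPair, lt_inv_of_neg (by norm_num) (by linarith), inv_neg_one]
  exact hw

lemma snd_iterate_cfPair_mem_Ioo (hx : Irrational x) (hxy : 1 < |x - y|) {n : ℕ} (hn : 3 ≤ n) :
    (cfPair^[n] (x, y)).2 ∈ Set.Ioo (-1) 0 := by
  have ha (m : ℕ) (hm : 0 < m) : 1 ≤ ⌊(cfPair^[m] (x, y)).1⌋ := by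
    rw [floor_fst_iterate_cfPair]; exact one_le_cfa hx hm
  induction n, hn using Nat.le_induction with
  | base =>
    have h₂ : (cfPair^[2] (x, y)).2 < 0 := by
      rw [Function.iterate_succ_apply']
      exact snd_cfPair_neg (ha 1 one_pos) (snd_cfPair_lt_one hxy)
    rw [Function.iterate_succ_apply']
    exact snd_cfPair_mem_Ioo (ha 2 two_pos) h₂
  | succ n hn ih =>
    rw [Function.iterate_succ_apply']
    exact snd_cfPair_mem_Ioo (ha n (by omega)) ih.2

/-- The partial quotient of `p.1` is recovered from the image as `⌊-(cfPair p).2⁻¹⌋`. -/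
lemma cfPair_injOn : Set.InjOn cfPair {p | Irrational p.1 ∧ p.2 ∈ Set.Ioo (-1) 0} := by
  have hfloor (p : ℝ × ℝ) (hp : p.2 ∈ Set.Ioo (-1) 0) : ⌊p.1⌋ = ⌊-(cfPair p).2⁻¹⌋ := by
    rw [eq_comm, Int.floor_eq_iff, cfPair, inv_inv]
    constructor <;> linarith [hp.1, hp.2]
  rintro p ⟨hp, hp'⟩ r ⟨hr, hr'⟩ he
  have ha : ⌊p.1⌋ = ⌊r.1⌋ := by rw [hfloor p hp', hfloor r hr', he]
  refine Prod.ext ?_ ?_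
  · rw [← floor_add_inv_cfMap hp, ← floor_add_inv_cfMap hr, ha]
    exact congrArg (fun s => (⌊r.1⌋ : ℝ) + s.1⁻¹) he
  · rw [← floor_add_inv_snd_cfPair p, ← floor_add_inv_snd_cfPair r, ha, he]

end ConjugatePair

section Periodicity

lemma Function.IsPeriodicPt.of_apply_of_injOn {α : Type*} {f : α → α} {S : Set α} {a : α}
    {r : ℕ} (hf : S.InjOn f) (ha : a ∈ S) (hra : f^[r] a ∈ S)
    (h : Function.IsPeriodicPt f r (f a)) : Function.IsPeriodicPt f r a := by
  refine hf hra ha ?_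
  rw [← Function.iterate_succ_apply' f r a, Function.iterate_succ_apply]
  exact h

lemma Function.IsPeriodicPt.iterate_of_injOn {α : Type*} {f : α → α} {S : Set α} {a : α}
    {r s N : ℕ} (hf : S.InjOn f) (hS : ∀ n ≥ s, f^[n] a ∈ S) (hsN : s ≤ N)
    (h : Function.IsPeriodicPt f r (f^[N] a)) : Function.IsPeriodicPt f r (f^[s] a) := by
  obtain ⟨d, rfl⟩ := Nat.exists_eq_add_of_le hsN
  induction d with
  | zero => exact h
  | succ d ih =>
    refine ih (by omega) (.of_apply_of_injOn hf (hS _ (by omega)) ?_ ?_)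
    · rw [← Function.iterate_add_apply]; exact hS _ (by omega)
    · rwa [← Function.iterate_succ_apply' f]

variable {x y : ℝ} {p p' : ℝ × ℝ} {q : ℤ × ℤ × ℤ}

namespace IsConjRoots

lemma eq_of_snd_neg (h : IsConjRoots q p) (h' : IsConjRoots q p') (hp : p.2 < 0)
    (hp' : 0 < p'.1) : p = p' := by
  have hfst : p.1 = p'.1 := by
    by_contra hne
    have h'' : IsConjRoots q (p.1, p'.1) := ⟨h.irrational, hne, h.ne_zero, h.eval_fst, h'.eval_fst⟩
    have := h.snd_eq h'' rfl
    linarith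
  exact Prod.ext hfst (h.snd_eq h' hfst)

lemma abs_coeff_le (h : IsConjRoots q p) (h₁ : 1 < p.1) (h₂ : p.2 ∈ Set.Ioo (-1) 0) :
    |q.1| ≤ quadDisc q ∧ |q.2.1| ≤ quadDisc q ∧ |q.2.2| ≤ quadDisc q := by
  obtain ⟨hB, hE⟩ := h.vieta
  have hA : (1 : ℝ) ≤ |(q.1 : ℝ)| := by
    exact_mod_cast Int.one_le_abs h.leadingCoeff_ne_zero
  have hd : (1 : ℝ) ≤ p.1 - p.2 := by linarith [h₂.2]
  set K := |(q.1 : ℝ)| * (p.1 - p.2)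
  have hK : K ≤ quadDisc q := by
    have hK₁ : 1 ≤ K := one_le_mul_of_one_le_of_one_le hA hd
    rw [h.quadDisc_eq, ← sq_abs, ← mul_pow]
    nlinarith
  have hsum : |p.1 + p.2| ≤ p.1 - p.2 := abs_le.mpr ⟨by linarith [h₂.1], by linarith [h₂.2]⟩
  have hprod : |p.1 * p.2| ≤ p.1 - p.2 := by
    rw [abs_mul, abs_of_pos (by linarith), abs_of_neg h₂.2]
    nlinarith [h₂.1, h₂.2]
  have hcast (c : ℤ) (hc : |(c : ℝ)| ≤ K) : |c| ≤ quadDisc q := by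
    exact_mod_cast (hc.trans hK)
  refine ⟨hcast _ (le_mul_of_one_le_right (abs_nonneg _) hd), hcast _ ?_, hcast _ ?_⟩
  · rw [← abs_neg, ← hB, abs_mul]
    exact mul_le_mul_of_nonneg_left hsum (abs_nonneg _)
  · rw [hE, abs_mul]
    exact mul_le_mul_of_nonneg_left hprod (abs_nonneg _)

/-- Lagrange's argument: the quadratics satisfied by the reduced complete quotients have bounded
coefficients, so two of them coincide. -/
lemma exists_isPeriodicPt (h : IsConjRoots q (x, y)) {s : ℕ}
    (hred : ∀ n ≥ s, (cfPair^[n] (x, y)).2 ∈ Set.Ioo (-1) 0) :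
    ∃ r > 0, ∃ N, Function.IsPeriodicPt cfPair r (cfPair^[N] (x, y)) := by
  choose Q hQd hQ using h.iterate
  have hfst (n : ℕ) (hn : 0 < n) : 1 < (cfPair^[n] (x, y)).1 := by
    obtain ⟨m, rfl⟩ := Nat.exists_eq_add_of_lt hn
    rw [fst_iterate_cfPair, zero_add, Function.iterate_succ_apply']
    exact one_lt_cfMap (irrational_iterate_cfMap h.irrational m)
  set D := quadDisc q
  have hmem (k : ℕ) : Q (s + 1 + k) ∈ Set.Icc (-D) D ×ˢ Set.Icc (-D) D ×ˢ Set.Icc (-D) D := by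
    obtain ⟨h₁, h₂, h₃⟩ := (hQ (s + 1 + k)).abs_coeff_le (hfst _ (by omega)) (hred _ (by omega))
    rw [hQd] at h₁ h₂ h₃
    exact ⟨abs_le.mp h₁, abs_le.mp h₂, abs_le.mp h₃⟩
  obtain ⟨k, l, hkl, hQkl⟩ := Set.Finite.exists_lt_map_eq_of_forall_mem hmem
    ((Set.finite_Icc _ _).prod ((Set.finite_Icc _ _).prod (Set.finite_Icc _ _)))
  have heq := (hQ (s + 1 + k)).eq_of_snd_neg (hQkl ▸ hQ (s + 1 + l))
    (hred (s + 1 + k) (by omega)).2 (zero_lt_one.trans (hfst (s + 1 + l) (by omega)))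
  refine ⟨l - k, by omega, s + 1 + k, ?_⟩
  rw [Function.IsPeriodicPt, Function.IsFixedPt, ← Function.iterate_add_apply,
    show l - k + (s + 1 + k) = s + 1 + l by omega, heq]

end IsConjRoots

end Periodicity

section ContinuantMatrix

def cfMatrix (a : ℕ → ℤ) : ℕ → Matrix (Fin 2) (Fin 2) ℤ
  | 0 => 1
  | k + 1 => cfMatrix a k * !![a k, 1; 1, 0]

variable {a : ℕ → ℤ}

@[simp]
lemma cfMatrix_succ_apply_zero (k : ℕ) (i : Fin 2) :
    cfMatrix a (k + 1) i 0 = cfMatrix a k i 0 * a k + cfMatrix a k i 1 := by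
  simp [cfMatrix, Matrix.mul_apply, Fin.sum_univ_two]

@[simp]
lemma cfMatrix_succ_apply_one (k : ℕ) (i : Fin 2) : cfMatrix a (k + 1) i 1 = cfMatrix a k i 0 := by
  simp [cfMatrix, Matrix.mul_apply, Fin.sum_univ_two]

lemma det_cfMatrix (k : ℕ) : (cfMatrix a k).det = (-1) ^ k := by
  induction k with
  | zero => simp [cfMatrix]
  | succ k ih => simp [cfMatrix, Matrix.det_mul, ih, pow_succ]

lemma cfMatrix_mem_Icc (ha : ∀ j, 0 ≤ a j) (k : ℕ) (i j : Fin 2) :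
    cfMatrix a k i j ∈ Set.Icc 0 (∏ j ∈ Finset.range k, (a j + 1)) := by
  induction k generalizing j with
  | zero => fin_cases i <;> fin_cases j <;> simp [cfMatrix]
  | succ k ih =>
    have h₀ := ih 0
    have h₁ := ih 1
    have hP : 0 ≤ ∏ j ∈ Finset.range k, (a j + 1) := h₀.1.trans h₀.2
    have hak := ha k
    rw [Finset.prod_range_succ]
    fin_cases j <;> simp only [Fin.zero_eta, Fin.mk_one, cfMatrix_succ_apply_zero,
      cfMatrix_succ_apply_one, Set.mem_Icc] <;> constructor <;> nlinarith [h₀.1, h₀.2, h₁.1, h₁.2]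

lemma one_le_cfMatrix_one_zero (ha : ∀ j, 1 ≤ a j) {k : ℕ} (hk : 0 < k) : 1 ≤ cfMatrix a k 1 0 := by
  have hnn (k : ℕ) := (cfMatrix_mem_Icc (fun j => (zero_le_one.trans (ha j))) k 1 0).1
  have hsum (k : ℕ) : 1 ≤ cfMatrix a k 1 0 + cfMatrix a k 1 1 := by
    induction k with
    | zero => simp [cfMatrix]
    | succ k ih =>
      simp only [cfMatrix_succ_apply_zero, cfMatrix_succ_apply_one]
      nlinarith [ha k, hnn k]
  obtain ⟨k, rfl⟩ := Nat.exists_eq_add_of_lt hk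
  rw [zero_add, cfMatrix_succ_apply_zero]
  nlinarith [ha k, hnn k, hsum k]

lemma cfMatrix_mobius {z : ℕ → ℝ} (hz : ∀ i, z i = a i + (z (i + 1))⁻¹)
    (hz₀ : ∀ i, z (i + 1) ≠ 0) (k : ℕ) :
    z 0 * (cfMatrix a k 1 0 * z k + cfMatrix a k 1 1) =
      cfMatrix a k 0 0 * z k + cfMatrix a k 0 1 := by
  induction k with
  | zero => simp [cfMatrix]
  | succ k ih =>
    rw [hz k] at ih
    have := hz₀ k
    simp only [cfMatrix_succ_apply_zero, cfMatrix_succ_apply_one]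
    push_cast
    field_simp at ih
    linear_combination ih

/-- The quadratic whose roots are the fixed points of the Möbius transformation of `M`. -/
def fixedQuad (M : Matrix (Fin 2) (Fin 2) ℤ) : ℤ × ℤ × ℤ := (M 1 0, M 1 1 - M 0 0, -M 0 1)

lemma quadEval_fixedQuad (M : Matrix (Fin 2) (Fin 2) ℤ) (z : ℝ) :
    quadEval (fixedQuad M) z = z * (M 1 0 * z + M 1 1) - (M 0 0 * z + M 0 1) := by
  simp only [quadEval, fixedQuad]
  push_cast
  ring

lemma quadDisc_fixedQuad (M : Matrix (Fin 2) (Fin 2) ℤ) :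
    quadDisc (fixedQuad M) = M.trace ^ 2 - 4 * M.det := by
  simp only [quadDisc, fixedQuad, discrim, Matrix.trace_fin_two, Matrix.det_fin_two]
  ring

lemma quadDisc_fixedQuad_cfMatrix_le (ha : ∀ j, 0 ≤ a j) (k : ℕ) :
    quadDisc (fixedQuad (cfMatrix a k)) ≤ (2 * ∏ j ∈ Finset.range k, (a j + 1) + 2) ^ 2 := by
  have h₀ := cfMatrix_mem_Icc ha k 0 0
  have h₁ := cfMatrix_mem_Icc ha k 1 1
  rw [quadDisc_fixedQuad, det_cfMatrix, Matrix.trace_fin_two]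
  rcases neg_one_pow_eq_or ℤ k with h | h <;> rw [h] <;> nlinarith [h₀.1, h₀.2, h₁.1, h₁.2]

end ContinuantMatrix

section MainBound

variable {x y : ℝ} {p : ℝ × ℝ} {q : ℤ × ℤ × ℤ}

lemma one_le_floor_of_snd_mem_Ioo (h : p.2 ∈ Set.Ioo (-1) 0)
    (h' : (cfPair p).2 ∈ Set.Ioo (-1) 0) : 1 ≤ ⌊p.1⌋ := by
  have hw : p.2 - ⌊p.1⌋ < 0 := inv_lt_zero.mp h'.2
  have : p.2 - ⌊p.1⌋ < -1 := by
    have := h'.1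
    rwa [cfPair, lt_inv_of_neg (by norm_num) hw, inv_neg_one] at this
  have : (0 : ℝ) < ⌊p.1⌋ := by linarith [h.1]
  exact_mod_cast this

namespace IsConjRoots

lemma fixedQuad_cfMatrix (h : IsConjRoots q p) {k : ℕ} (hk : 0 < k)
    (hper : Function.IsPeriodicPt cfPair k p) (ha : ∀ j, 1 ≤ ⌊(cfPair^[j] p).1⌋) :
    IsConjRoots (fixedQuad (cfMatrix (fun j => ⌊(cfPair^[j] p).1⌋) k)) p := by
  choose Q _ hQ using h.iterate
  have hroot (f : ℝ × ℝ → ℝ)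
      (hf : ∀ i, f (cfPair^[i] p) = ⌊(cfPair^[i] p).1⌋ + (f (cfPair^[i + 1] p))⁻¹)
      (hf₀ : ∀ i, f (cfPair^[i + 1] p) ≠ 0) :
      quadEval (fixedQuad (cfMatrix (fun j => ⌊(cfPair^[j] p).1⌋) k)) (f p) = 0 := by
    have := cfMatrix_mobius (z := fun i => f (cfPair^[i] p)) hf hf₀ k
    simp only [Function.iterate_zero, id, hper.eq] at this
    rw [quadEval_fixedQuad, this, sub_self]
  refine ⟨h.irrational, h.ne, fun h₀ => ?_, hroot Prod.fst (fun i => ?_) (fun i => ?_),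
    hroot Prod.snd (fun i => ?_) (fun i => ?_)⟩
  · have := one_le_cfMatrix_one_zero ha hk
    rw [show cfMatrix _ k 1 0 = 0 from congrArg Prod.fst h₀] at this
    omega
  · rw [Function.iterate_succ_apply', cfPair, floor_add_inv_cfMap (hQ i).irrational]
  · exact (hQ (i + 1)).irrational.ne_zero
  · rw [Function.iterate_succ_apply', floor_add_inv_snd_cfPair]
  · exact (hQ (i + 1)).irrational_snd.ne_zero

lemma abs_sub_le_of_quadDisc_le (h : IsConjRoots q p) {B : ℝ} (hB : 0 ≤ B)
    (hd : (quadDisc q : ℝ) ≤ B ^ 2) : |p.1 - p.2| ≤ B := by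
  have hA : (1 : ℝ) ≤ (q.1 : ℝ) ^ 2 := by
    exact_mod_cast Int.one_le_abs h.leadingCoeff_ne_zero |>.trans (Int.le_self_sq _) |>.trans_eq
      (sq_abs _)
  refine abs_le_of_sq_le_sq ?_ hB
  rw [h.quadDisc_eq] at hd
  nlinarith [sq_nonneg (p.1 - p.2)]

lemma abs_sub_le_of_periodic (h : IsConjRoots q (x, y)) {s N k : ℕ}
    (hred : ∀ n ≥ s, (cfPair^[n] (x, y)).2 ∈ Set.Ioo (-1) 0) (hk : 0 < k)
    (hper : ∀ n ≥ N, cfa x (n + k) = cfa x n) :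
    |x - y| ≤ 2 * ∏ j ∈ Finset.range k, ((cfa x (s + j) : ℝ) + 1) + 2 := by
  choose Q hQd hQ using h.iterate
  have hirr (n : ℕ) := irrational_iterate_cfMap h.irrational n
  set N' := max N s
  have hfst : (cfPair^[N' + k] (x, y)).1 = (cfPair^[N'] (x, y)).1 := by
    rw [fst_iterate_cfPair, fst_iterate_cfPair]
    refine eq_of_cfa_eq (hirr _) (hirr _) fun i => ?_
    rw [cfa_iterate_cfMap, cfa_iterate_cfMap, ← add_assoc, hper _ (by omega)]
  have hN : Function.IsPeriodicPt cfPair k (cfPair^[N'] (x, y)) := by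
    rw [Function.IsPeriodicPt, Function.IsFixedPt, ← Function.iterate_add_apply, add_comm]
    exact Prod.ext hfst ((hQ _).snd_eq (hQ _) hfst)
  have hs : Function.IsPeriodicPt cfPair k (cfPair^[s] (x, y)) :=
    hN.iterate_of_injOn cfPair_injOn (fun n hn => ⟨by rw [fst_iterate_cfPair]; exact hirr n,
      hred n hn⟩) (le_max_right N s)
  have hquot : (fun j => ⌊(cfPair^[j] (cfPair^[s] (x, y))).1⌋) = fun j => cfa x (s + j) := by
    ext j
    rw [← Function.iterate_add_apply, floor_fst_iterate_cfPair, add_comm]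
  have ha (j : ℕ) : 1 ≤ cfa x (s + j) := by
    rw [← floor_fst_iterate_cfPair x y]
    refine one_le_floor_of_snd_mem_Ioo (hred _ (by omega)) ?_
    rw [← Function.iterate_succ_apply' cfPair]
    exact hred _ (by omega)
  have hfix := (hQ s).fixedQuad_cfMatrix hk hs (fun j => congrFun hquot j ▸ ha j)
  rw [hquot] at hfix
  obtain ⟨q₀, hq₀, h₀⟩ := hfix.of_iterate h.irrational
  have hprod : (0 : ℝ) ≤ ∏ j ∈ Finset.range k, ((cfa x (s + j) : ℝ) + 1) :=
    Finset.prod_nonneg fun j _ => by linarith [(by exact_mod_cast ha j : (1 : ℝ) ≤ cfa x (s + j))]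
  refine h₀.abs_sub_le_of_quadDisc_le (by linarith) ?_
  rw [hq₀]
  exact_mod_cast quadDisc_fixedQuad_cfMatrix_le (fun j => zero_le_one.trans (ha j)) k

end IsConjRoots

end MainBound

lemma exists_quadEval_eq_zero {K : Type*} [Field K] [Algebra ℚ K] [FiniteDimensional ℚ K]
    (hK : Module.finrank ℚ K ≤ 2) (a : K) :
    ∃ q : ℤ × ℤ × ℤ, q ≠ 0 ∧ ∀ f : K →+* ℝ, quadEval q (f a) = 0 := by
  have hli : ¬ LinearIndependent ℤ ![1, a, a ^ 2] := by
    rw [LinearIndependent.iff_fractionRing ℤ ℚ]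
    intro h
    have := h.fintype_card_le_finrank
    simp only [Fintype.card_fin] at this
    omega
  obtain ⟨g, hg, i, hi⟩ := Fintype.not_linearIndependent_iff.mp hli
  refine ⟨(g 2, g 1, g 0), fun h₀ => hi ?_, fun f => ?_⟩
  · simp only [Prod.mk_eq_zero] at h₀
    fin_cases i <;> simp [h₀]
  · have := congrArg f hg
    simp only [Fin.sum_univ_three, Matrix.cons_val_zero, Matrix.cons_val_one, Matrix.cons_val_two,
      Matrix.head_cons, Matrix.tail_cons, zsmul_eq_mul, mul_one, map_add, map_mul, map_intCast,
      map_pow, map_zero] at this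
    simp only [quadEval]
    linear_combination this

lemma cfa_add_of_isPeriodicPt {x y : ℝ} {r N n : ℕ}
    (h : Function.IsPeriodicPt cfPair r (cfPair^[N] (x, y))) (hn : N ≤ n) :
    cfa x (n + r) = cfa x n := by
  obtain ⟨d, rfl⟩ := Nat.exists_eq_add_of_le hn
  have : cfPair^[N + d + r] (x, y) = cfPair^[N + d] (x, y) := by
    rw [show N + d + r = r + d + N by omega, Function.iterate_add_apply, Function.iterate_add_apply,
      (h.apply_iterate d).eq, ← Function.iterate_add_apply, add_comm d]
  rw [← floor_fst_iterate_cfPair x y, ← floor_fst_iterate_cfPair x y, this]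

lemma two_mul_prod_add_two_le {a : ℕ → ℝ} (ha : ∀ j, 1 ≤ a j) {ℓ C : ℕ} (hℓ : ℓ ≤ C) :
    2 * ∏ j ∈ Finset.range ℓ, (a j + 1) + 2 ≤ 4 * 2 ^ C * ∏ j ∈ Finset.range C, a j := by
  have h₁ : ∏ j ∈ Finset.range ℓ, (a j + 1) ≤ ∏ j ∈ Finset.range C, (a j + 1) :=
    Finset.prod_le_prod_of_subset_of_one_le (Finset.range_subset_range.mpr hℓ)
      (fun j _ => by linarith [ha j]) (fun j _ _ => by linarith [ha j])
  have h₂ : ∏ j ∈ Finset.range C, (a j + 1) ≤ ∏ j ∈ Finset.range C, (2 * a j) :=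
    Finset.prod_le_prod (fun j _ => by linarith [ha j]) (fun j _ => by linarith [ha j])
  have h₃ : 1 ≤ ∏ j ∈ Finset.range ℓ, (a j + 1) :=
    Finset.one_le_prod (fun j _ => by linarith [ha j])
  rw [Finset.prod_mul_distrib, Finset.prod_const, Finset.card_range] at h₂
  linarith

lemma log_abs_sub_le_of_periodLength_le {x y : ℝ} {q : ℤ × ℤ × ℤ} (hx : Irrational x)
    (hq : q ≠ 0) (hqx : quadEval q x = 0) (hqy : quadEval q y = 0) {C : ℕ}
    (hC : periodLength x ≤ C) :
    Real.log |x - y| ≤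
      Real.log 4 + C * Real.log 2 + ∑ j ∈ Finset.range C, Real.log (cfa x (3 + j)) := by
  have ha (j : ℕ) : (1 : ℝ) ≤ cfa x (3 + j) := by exact_mod_cast one_le_cfa hx (by omega)
  have hrhs :
      0 ≤ Real.log 4 + C * Real.log 2 + ∑ j ∈ Finset.range C, Real.log (cfa x (3 + j)) := by
    have := Finset.sum_nonneg fun j (_ : j ∈ Finset.range C) => Real.log_nonneg (ha j)
    have := Real.log_nonneg (by norm_num : (1 : ℝ) ≤ 4)
    have := Real.log_nonneg (by norm_num : (1 : ℝ) ≤ 2)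
    positivity
  rcases le_or_gt |x - y| 1 with hle | hlt
  · exact (Real.log_nonpos (abs_nonneg _) hle).trans hrhs
  have hxy : x ≠ y := by rintro rfl; norm_num at hlt
  have h : IsConjRoots q (x, y) := ⟨hx, hxy, hq, hqx, hqy⟩
  have hred (n : ℕ) (hn : n ≥ 3) := snd_iterate_cfPair_mem_Ioo hx hlt hn
  obtain ⟨r, hr, N, hN⟩ := h.exists_isPeriodicPt hred
  obtain ⟨hℓ, N', hper⟩ : periodLength x ∈
      {p : ℕ | 0 < p ∧ ∃ N : ℕ, ∀ n ≥ N, cfa x (n + p) = cfa x n} := by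
    rw [periodLength, if_pos hx]
    exact Nat.sInf_mem ⟨r, hr, N, fun n hn => cfa_add_of_isPeriodicPt hN hn⟩
  have hb := (h.abs_sub_le_of_periodic hred hℓ hper).trans (two_mul_prod_add_two_le ha hC)
  have hprod : 0 < ∏ j ∈ Finset.range C, (cfa x (3 + j) : ℝ) :=
    Finset.prod_pos fun j _ => zero_lt_one.trans_le (ha j)
  calc Real.log |x - y|
      ≤ Real.log (4 * 2 ^ C * ∏ j ∈ Finset.range C, (cfa x (3 + j) : ℝ)) :=
        Real.log_le_log (by linarith) hb
    _ = _ := by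
        rw [Real.log_mul (by positivity) hprod.ne', Real.log_mul (by norm_num) (by positivity),
          Real.log_pow, Real.log_prod fun j _ => (zero_lt_one.trans_le (ha j)).ne']

theorem stmt_2_general (K : IntermediateField ℚ ℝ) (hK : Module.finrank ℚ K = 2)
    (conj : K ≃ₐ[ℚ] K)
    (A : ℕ → K) (hirr : ∀ n : ℕ, Irrational (A n : ℝ))
    (hai : ∀ i : ℕ, 1 ≤ i →
      Tendsto (fun n : ℕ => Real.log ((cfa (A n : ℝ) i : ℝ)) / (n : ℝ)) atTop (nhds 0))
    (hgrow : ∃ L : ℝ, 0 < L ∧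
      Tendsto (fun n : ℕ => Real.log |(A n : ℝ) - ((conj (A n) : K) : ℝ)| / (n : ℝ))
        atTop (nhds L)) :
    ∀ C : ℕ, ∃ n : ℕ, C < periodLength (A n : ℝ) := by
  intro C
  by_contra! hC
  obtain ⟨L, hL, hlim⟩ := hgrow
  have : FiniteDimensional ℚ K := Module.finite_of_finrank_eq_succ hK
  have hbound (n : ℕ) : Real.log |(A n : ℝ) - ((conj (A n) : K) : ℝ)| / n ≤
      (Real.log 4 + C * Real.log 2 +
        ∑ j ∈ Finset.range C, Real.log (cfa (A n : ℝ) (3 + j))) / n := by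
    obtain ⟨q, hq, hroot⟩ := exists_quadEval_eq_zero hK.le (A n)
    refine div_le_div_of_nonneg_right ?_ n.cast_nonneg
    exact log_abs_sub_le_of_periodLength_le (hirr n) hq (hroot (algebraMap K ℝ))
      (hroot ((algebraMap K ℝ).comp conj.toRingHom)) (hC n)
  have hzero : Tendsto (fun n : ℕ => (Real.log 4 + C * Real.log 2 +
      ∑ j ∈ Finset.range C, Real.log (cfa (A n : ℝ) (3 + j))) / n) atTop (nhds 0) := by
    have := (tendsto_const_div_atTop_nhds_zero_nat (Real.log 4 + C * Real.log 2)).add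
      (tendsto_finsetSum (Finset.range C) fun j _ => hai (3 + j) (by omega))
    rw [Finset.sum_const_zero, add_zero] at this
    exact this.congr fun n => by rw [← Finset.sum_div, ← add_div]
  exact hL.not_ge (le_of_tendsto_of_tendsto' hlim hzero hbound)

/-- if the partial quotients satisfy `lim (log a_i(A_n))/n = 0` for all `i ≥ 1`
and `lim (log |A_n - A_n'|)/n` exists and is positive, then the period lengths are unbounded. -/
theorem stmt_2 (K : IntermediateField ℚ ℝ) (hK : Module.finrank ℚ K = 2)
    (conj : K ≃ₐ[ℚ] K) (hconj : conj ≠ AlgEquiv.refl)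
    (A : ℕ → K) (hirr : ∀ n : ℕ, Irrational (A n : ℝ))
    (hai : ∀ i : ℕ, 1 ≤ i →
      Tendsto (fun n : ℕ => Real.log ((cfa (A n : ℝ) i : ℝ)) / (n : ℝ)) atTop (nhds 0))
    (hgrow : ∃ L : ℝ, 0 < L ∧
      Tendsto (fun n : ℕ => Real.log |(A n : ℝ) - ((conj (A n) : K) : ℝ)| / (n : ℝ))
        atTop (nhds L)) :
    ∀ C : ℕ, ∃ n : ℕ, C < periodLength (A n : ℝ) :=
  stmt_2_general K hK conj A hirr hai hgrow
end

section
/- Let K ⊆ ℝ be a real quadratic number field and (A_n)_n a non-degenerate linear recurrence sequence with values in K such that the sequence (A_n^K)_n is non-zero. Then no root of the linear recurrence sequence (A_n^K)_n is a root of unity. -/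
/-!
If `α` were a root of unity and a root of the characteristic polynomial of `A^K`, then it is a
root of `P_A`, whose coefficients are real, so its complex conjugate is a root of `P_A` too.
Since `α / conj α` is again a root of unity, non-degeneracy forces `α = conj α`, i.e. `α = ±1`.
Then `X ∓ 1` is an irreducible factor of `P_A^K` fixed by the Galois conjugation, which the
definition of `P_A^K` excludes.
-/

open Polynomial Filter

/-- Characteristic polynomial `X^k - c_1 X^(k-1) - ⋯ - c_k` of a linear recurrence
`A_n = c_1 A_(n-1) + ⋯ + c_k A_(n-k)`, where `c i = c_(i+1)`. -/
noncomputable def charPoly {K : Type*} [Field K] (k : ℕ) (c : Fin k → K) : Polynomial K :=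
  X ^ k - ∑ i : Fin k, C (c i) * X ^ (k - 1 - (i : ℕ))

/-- The embedding of a subfield `K` of `ℝ` into `ℂ`. -/
noncomputable def embC (K : IntermediateField ℚ ℝ) : K →+* ℂ :=
  Complex.ofRealHom.comp (algebraMap K ℝ)

/-- `B` satisfies the linear recurrence with (monic) characteristic polynomial `Q`. -/
def SatisfiesRec {K : Type*} [Field K] (B : ℕ → K) (Q : Polynomial K) : Prop :=
  ∀ n : ℕ, ∑ i ∈ Finset.range (Q.natDegree + 1), Q.coeff i * B (n + i) = 0

/-- `Q` is the (minimal) characteristic polynomial of the sequence `B`. -/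
def IsCharPolyOf {K : Type*} [Field K] (B : ℕ → K) (Q : Polynomial K) : Prop :=
  Q.Monic ∧ SatisfiesRec B Q ∧ ∀ Q' : Polynomial K, Q'.Monic → SatisfiesRec B Q' → Q ∣ Q'

theorem Polynomial.IsRoot.apply_of_comp_eq {R S : Type*} [CommSemiring R] [CommSemiring S]
    {σ : S →+* S} {f : R →+* S} (hσf : σ.comp f = f) {p : R[X]} {α : S}
    (h : (p.map f).IsRoot α) : (p.map f).IsRoot (σ α) := by
  rw [IsRoot, eval_map, ← hσf, ← hom_eval₂, ← eval_map, h.eq_zero, map_zero]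

theorem starRingEnd_comp_embC (K : IntermediateField ℚ ℝ) :
    (starRingEnd ℂ).comp (embC K) = embC K := by
  ext x
  simp [embC]

theorem Complex.eq_one_or_eq_neg_one_of_conj_eq_of_pow_eq_one {α : ℂ}
    (hα : starRingEnd ℂ α = α) {m : ℕ} (hm : 0 < m) (h : α ^ m = 1) : α = 1 ∨ α = -1 := by
  obtain ⟨r, rfl⟩ := Complex.conj_eq_iff_real.mp hα
  have hr : r ^ m = 1 := mod_cast h
  rcases pow_eq_one_iff_cases.mp hr with hm0 | rfl | ⟨rfl, -⟩
  · omega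
  all_goals simp

theorem conj_eq_self_of_isRoot_of_pow_eq_one {P : ℂ[X]}
    (hP : ∀ β, P.IsRoot β → P.IsRoot (starRingEnd ℂ β))
    (hnd : ∀ α β : ℂ, P.IsRoot α → P.IsRoot β → (∃ m : ℕ, 0 < m ∧ (α / β) ^ m = 1) → α = β)
    {α : ℂ} (hα : P.IsRoot α) {m : ℕ} (hm : 0 < m) (h : α ^ m = 1) :
    starRingEnd ℂ α = α := by
  refine (hnd _ _ hα (hP α hα) ⟨m, hm, ?_⟩).symm
  rw [div_pow, ← map_pow, h, map_one, div_one]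

theorem stmt_10 (K : IntermediateField ℚ ℝ)
    (conj : K ≃ₐ[ℚ] K)
    (k : ℕ) (c : Fin k → K)
    (hnd : ∀ α β : ℂ, ((charPoly k c).map (embC K)).IsRoot α →
      ((charPoly k c).map (embC K)).IsRoot β →
      (∃ m : ℕ, 0 < m ∧ (α / β) ^ m = 1) → α = β)
    (PQ PK : Polynomial K) (hPKmonic : PK.Monic)
    (hfact : charPoly k c = PQ * PK)
    (hPK : ∀ π : Polynomial K, π.Monic → Irreducible π → π ∣ PK →
      π.map conj.toAlgHom.toRingHom ≠ π)
    (B : ℕ → K) (hBrec : SatisfiesRec B PK) :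
    ∀ QB : Polynomial K, IsCharPolyOf B QB →
      ∀ α : ℂ, (QB.map (embC K)).IsRoot α → ¬ (∃ m : ℕ, 0 < m ∧ α ^ m = 1) := by
  rintro QB ⟨-, -, hQBmin⟩ α hα ⟨m, hm, hαm⟩
  have hQB_dvd : QB ∣ PK := hQBmin PK hPKmonic hBrec
  have hα_char : ((charPoly k c).map (embC K)).IsRoot α :=
    eval_eq_zero_of_dvd_of_eval_eq_zero
      (map_dvd _ (hQB_dvd.trans (Dvd.intro_left PQ hfact.symm))) hα
  have hα_real : starRingEnd ℂ α = α :=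
    conj_eq_self_of_isRoot_of_pow_eq_one
      (fun _ ↦ IsRoot.apply_of_comp_eq (starRingEnd_comp_embC K)) hnd hα_char hm hαm
  obtain ⟨a, rfl, ha⟩ : ∃ a : K, embC K a = α ∧ (a = 1 ∨ a = -1) := by
    rcases Complex.eq_one_or_eq_neg_one_of_conj_eq_of_pow_eq_one hα_real hm hαm with rfl | rfl
    · exact ⟨1, map_one _, .inl rfl⟩
    · exact ⟨-1, by simp, .inr rfl⟩
  have hX_sub_dvd : X - C a ∣ PK :=
    (dvd_iff_isRoot.mpr (hα.of_map (embC K).injective)).trans hQB_dvd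
  refine hPK _ (monic_X_sub_C a) (irreducible_X_sub_C a) hX_sub_dvd ?_
  rcases ha with rfl | rfl <;> simp
end

section
/- Let K = ℚ(α) where α > 1 is a quadratic irrational real number which is a unit in the ring of integers of K. Let (r(n))_n be a sequence of even positive integers with r(n) → ∞ as n → ∞, and set A_n = α^{r(n)} + α^{2r(n)}. Then for all sufficiently large n the continued fraction expansion of A_n is A_n = [tr(A_n) − 1; \overline{1, ⌊α^{r(n)}⌋ − 2, 1, tr(A_n) − 2}]; in particular ℓ(A_n) = 4 for all sufficiently large n, and the sequence (ℓ(A_n))_n of period lengths is bounded. -/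
/-!
For even `m` the conjugate of `β = α ^ m` is `β⁻¹`, so `s = β + β⁻¹` is the integer trace of
`α ^ m`, `β` is a root of `X² - sX + 1`, and `tr(β + β²) = s² + s - 2`. Once `β ≥ 3` (i.e. `β⁻¹ ≤ 1/3`)
the complete quotients of `β + β²` can be written down exactly: the Gauss map sends it to
`β²/(β² - β - 1) ↦ (β² - β - 1)/(β + 1) ↦ (β² + β)/(β² + β - 1) ↦ β² + β - 1 = (β + β²) - 1`,
which has the same fractional part as `β + β²`, so the orbit closes up with period 4. The partial
quotients `1, s - 3, 1, s² + s - 4` then exclude any shorter eventual period.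
-/

open Polynomial Filter

lemma exists_int_pow_eq_linear {R : Type*} [CommRing R] (t e : ℤ) (k : ℕ) :
    ∃ a b : ℤ, ∀ x : R, x ^ 2 = t * x - e → x ^ k = a * x + b := by
  induction k with
  | zero => exact ⟨0, 1, fun x _ => by simp⟩
  | succ k ih =>
    obtain ⟨a, b, h⟩ := ih
    refine ⟨a * t + b, -(a * e), fun x hx => ?_⟩
    rw [pow_succ, h x hx]
    push_cast
    linear_combination a * hx

lemma exists_int_eq_pow_add_conj_pow {R : Type*} [CommRing R] {α : R} {t e : ℤ} (h : α ^ 2 = t * α - e) (k : ℕ) :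
      ∃ s : ℤ, (s : R) = α ^ k + (t - α) ^ k := by
  obtain ⟨a, b, hab⟩ := exists_int_pow_eq_linear (R := R) t e k
  have hconj : (t - α) ^ 2 = t * (t - α) - e := by linear_combination h
  exact ⟨a * t + 2 * b, by rw [hab α h, hab _ hconj]; push_cast; ring⟩

lemma pow_eq_inv_pow_of_sq_mul_eq_one {M : Type*} [DivisionCommMonoid M] {x y : M} (h : (x * y) ^ 2 = 1) {m : ℕ} (hm : Even m) :
    y ^ m = (x ^ m)⁻¹ := by
  obtain ⟨k, rfl⟩ := hm
  refine eq_inv_of_mul_eq_one_right ?_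
  rw [← mul_pow, ← two_mul, pow_mul, h, one_pow]

lemma irrational_of_sq_eq_mul_sub_one {β : ℝ} {s : ℤ} (hβ : 1 < β) (h : β ^ 2 = s * β - 1) :
    Irrational β := by
  rintro ⟨q, rfl⟩
  have hq : q ^ 2 = s * q - 1 := by exact_mod_cast h
  have hint : IsIntegral ℤ q := by
    refine ⟨X ^ 2 - C s * X + 1, by monicity!, ?_⟩
    rw [← aeval_def]
    simp only [map_add, map_sub, map_mul, map_pow, aeval_X, aeval_C, map_one]
    linear_combination hq
  obtain ⟨z, rfl⟩ := IsIntegrallyClosed.isIntegral_iff.mp hint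
  simp only [algebraMap_int_eq, eq_intCast, Rat.cast_intCast] at hβ hq
  norm_cast at hβ hq
  have hz : z * (s - z) = 1 := by linear_combination (-1 : ℤ) * hq
  have := Int.eq_one_or_neg_one_of_mul_eq_one hz
  omega

lemma cfMap_eq_of_floor_eq {x y : ℝ} {k : ℤ} (hk : ⌊x⌋ = k) (hy : (x - k) * y = 1) :
    cfMap x = y := by
  have hfract : Int.fract x = x - k := by rw [Int.fract, hk]
  rw [cfMap, hfract, if_neg (left_ne_zero_of_mul_eq_one hy), inv_eq_of_mul_eq_one_right hy]

lemma cfa_succ (x : ℝ) (n : ℕ) : cfa x (n + 1) = cfa (cfMap x) n := by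
  rw [cfa, cfa, Function.iterate_succ_apply]

lemma cfa_mul_add_of_isPeriodicPt {y : ℝ} {p : ℕ} (hy : Function.IsPeriodicPt cfMap p y)
    (j i : ℕ) : cfa y (p * j + i) = cfa y i := by
  rw [cfa, cfa, add_comm, Function.iterate_add_apply, (hy.mul_const j).eq]

lemma periodLength_eq_of_isLeast {x : ℝ} (hx : Irrational x) {p : ℕ}
    (hp : IsLeast {p : ℕ | 0 < p ∧ ∃ N : ℕ, ∀ n ≥ N, cfa x (n + p) = cfa x n} p) :
    periodLength x = p := by
  rw [periodLength, if_pos hx, hp.csInf_eq]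

lemma isLeast_eventual_periods_of_four_pattern {α : Type*} {f : ℕ → α} {a b c : α}
    (hf : ∀ j, f (4 * j + 1) = a ∧ f (4 * j + 2) = b ∧ f (4 * j + 3) = a ∧ f (4 * j + 4) = c)
    (hca : c ≠ a) (hcb : c ≠ b) :
    IsLeast {p : ℕ | 0 < p ∧ ∃ N : ℕ, ∀ n ≥ N, f (n + p) = f n} 4 := by
  refine ⟨⟨by norm_num, 1, fun n hn => ?_⟩, ?_⟩
  · obtain ⟨j, i, hi, rfl⟩ : ∃ j i, i < 4 ∧ n = 4 * j + i + 1 :=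
      ⟨(n - 1) / 4, (n - 1) % 4, Nat.mod_lt _ (by norm_num), by omega⟩
    rw [show 4 * j + i + 1 + 4 = 4 * (j + 1) + i + 1 by ring]
    have := hf j
    have := hf (j + 1)
    interval_cases i <;> simp_all
  · rintro p ⟨hp, N, hN⟩
    by_contra! hp4
    obtain ⟨-, h2, h3, h4⟩ := hf N
    interval_cases p
    · exact hca (h4 ▸ h3 ▸ hN (4 * N + 3) (by omega))
    · exact hcb (h4 ▸ h2 ▸ hN (4 * N + 2) (by omega))
    · have h := hN (4 * N + 4) (by omega)
      rw [show 4 * N + 4 + 3 = 4 * (N + 1) + 3 by ring, (hf (N + 1)).2.2.1, h4] at h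
      exact hca h.symm

section AddSq

variable {β : ℝ} {s : ℤ}

lemma floor_eq_sub_one_of_eq_add_inv (hβ : 1 ≤ β) (hs : (s : ℝ) = β + β⁻¹) : ⌊β⌋ = s - 1 := by
  have hu : β⁻¹ ≤ 1 := inv_le_one_of_one_le₀ hβ
  have : 0 < β⁻¹ := by positivity
  rw [Int.floor_eq_iff]
  push_cast
  constructor <;> linarith

lemma floors_add_sq_orbit (hβ : 3 ≤ β) (hs : (s : ℝ) = β + β⁻¹) :
    ⌊β + β ^ 2⌋ = s ^ 2 + s - 3 ∧ ⌊β ^ 2 / (β ^ 2 - β - 1)⌋ = 1 ∧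
    ⌊(β ^ 2 - β - 1) / (β + 1)⌋ = s - 3 ∧ ⌊(β ^ 2 + β) / (β ^ 2 + β - 1)⌋ = 1 ∧
    ⌊β ^ 2 + β - 1⌋ = s ^ 2 + s - 4 := by
  have hinv : β * β⁻¹ = 1 := mul_inv_cancel₀ (by positivity)
  have hu : β⁻¹ ≤ 1 / 3 := by rw [inv_eq_one_div]; gcongr
  have hu0 : 0 < β⁻¹ := by positivity
  have d1 : 0 < β ^ 2 - β - 1 := by nlinarith
  have d2 : 0 < β + 1 := by linarith
  have d3 : 0 < β ^ 2 + β - 1 := by nlinarith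
  have f0 : ⌊β + β ^ 2⌋ = s ^ 2 + s - 3 := by
    rw [Int.floor_eq_iff]; push_cast; rw [hs]; constructor <;> nlinarith
  refine ⟨f0, ?_, ?_, ?_, ?_⟩
  · rw [Int.floor_eq_iff, le_div_iff₀ d1, div_lt_iff₀ d1]; push_cast; constructor <;> nlinarith
  · rw [Int.floor_eq_iff, le_div_iff₀ d2, div_lt_iff₀ d2]; push_cast; rw [hs]
    constructor <;> nlinarith
  · rw [Int.floor_eq_iff, le_div_iff₀ d3, div_lt_iff₀ d3]; push_cast; constructor <;> nlinarith
  · rw [show β ^ 2 + β - 1 = β + β ^ 2 - (1 : ℤ) by push_cast; ring, Int.floor_sub_intCast, f0]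
    ring

lemma cfMap_add_sq_orbit (hβ : 3 ≤ β) (hs : (s : ℝ) = β + β⁻¹) :
    cfMap (β + β ^ 2) = β ^ 2 / (β ^ 2 - β - 1) ∧
    cfMap (β ^ 2 / (β ^ 2 - β - 1)) = (β ^ 2 - β - 1) / (β + 1) ∧
    cfMap ((β ^ 2 - β - 1) / (β + 1)) = (β ^ 2 + β) / (β ^ 2 + β - 1) ∧
    cfMap ((β ^ 2 + β) / (β ^ 2 + β - 1)) = β ^ 2 + β - 1 ∧
    cfMap (β ^ 2 + β - 1) = β ^ 2 / (β ^ 2 - β - 1) := by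
  have hβ0 : β ≠ 0 := by positivity
  have d1 : β ^ 2 - β - 1 ≠ 0 := by nlinarith
  have d2 : β + 1 ≠ 0 := by linarith
  have d3 : β ^ 2 + β - 1 ≠ 0 := by nlinarith
  obtain ⟨f0, f1, f2, f3, f4⟩ := floors_add_sq_orbit hβ hs
  refine ⟨cfMap_eq_of_floor_eq f0 ?_, cfMap_eq_of_floor_eq f1 ?_, cfMap_eq_of_floor_eq f2 ?_,
    cfMap_eq_of_floor_eq f3 ?_, cfMap_eq_of_floor_eq f4 ?_⟩
  · rw [mul_div_assoc', div_eq_one_iff_eq d1]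
    push_cast; rw [hs]; field_simp; ring
  · rw [mul_div_assoc', div_eq_one_iff_eq d2, Int.cast_one, sub_one_mul, div_mul_cancel₀ _ d1]
    ring
  · rw [mul_div_assoc', div_eq_one_iff_eq d3]
    push_cast; rw [hs]; field_simp; ring
  · rw [Int.cast_one, sub_one_mul, div_mul_cancel₀ _ d3]
    ring
  · rw [mul_div_assoc', div_eq_one_iff_eq d1]
    push_cast; rw [hs]; field_simp; ring

theorem cfa_add_sq (hβ : 3 ≤ β) (hs : (s : ℝ) = β + β⁻¹) :
    cfa (β + β ^ 2) 0 = s ^ 2 + s - 3 ∧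
    ∀ j : ℕ, cfa (β + β ^ 2) (4 * j + 1) = 1 ∧ cfa (β + β ^ 2) (4 * j + 2) = s - 3 ∧
      cfa (β + β ^ 2) (4 * j + 3) = 1 ∧ cfa (β + β ^ 2) (4 * j + 4) = s ^ 2 + s - 4 := by
  obtain ⟨f0, f1, f2, f3, f4⟩ := floors_add_sq_orbit hβ hs
  obtain ⟨h0, h1, h2, h3, h4⟩ := cfMap_add_sq_orbit hβ hs
  have hper : Function.IsPeriodicPt cfMap 4 (β ^ 2 / (β ^ 2 - β - 1)) := by
    simp only [Function.IsPeriodicPt, Function.IsFixedPt, Function.iterate_succ_apply',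
      Function.iterate_zero_apply, h1, h2, h3, h4]
  refine ⟨by rw [cfa, Function.iterate_zero_apply, f0], fun j => ?_⟩
  have hcfa : ∀ i, cfa (β + β ^ 2) (4 * j + i + 1) = cfa (β ^ 2 / (β ^ 2 - β - 1)) i := by
    intro i
    rw [cfa_succ, h0, cfa_mul_add_of_isPeriodicPt hper]
  refine ⟨(hcfa 0).trans ?_, (hcfa 1).trans ?_, (hcfa 2).trans ?_, (hcfa 3).trans ?_⟩ <;>
    simp [cfa, h1, h2, h3, f1, f2, f3, f4]

theorem periodLength_add_sq (hβ : 3 ≤ β) (hs : (s : ℝ) = β + β⁻¹) :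
    periodLength (β + β ^ 2) = 4 := by
  have hsβ : β < s := by rw [hs]; linarith [inv_pos.2 (by linarith : 0 < β)]
  have hs3 : 3 < s := by exact_mod_cast hβ.trans_lt hsβ
  have hquad : β ^ 2 = s * β - 1 := by rw [hs, add_mul, inv_mul_cancel₀ (by positivity)]; ring
  have hirr : Irrational (β + β ^ 2) := by
    have : β + β ^ 2 = ((s + 1 : ℤ) : ℝ) * β - (1 : ℤ) := by push_cast; linear_combination hquad
    rw [this]
    exact ((irrational_of_sq_eq_mul_sub_one (by linarith) hquad).intCast_mul (by omega)).sub_intCast 1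
  refine periodLength_eq_of_isLeast hirr
    (isLeast_eventual_periods_of_four_pattern (cfa_add_sq hβ hs).2 ?_ ?_) <;> nlinarith

end AddSq

theorem stmt_12_general (α : ℝ) (hα1 : 1 < α)
    (t e : ℤ) (he : e = 1 ∨ e = -1) (hunit : α ^ 2 = (t : ℝ) * α - (e : ℝ))
    (r : ℕ → ℕ) (heven : ∀ n, Even (r n))
    (hrinf : Tendsto r atTop atTop)
    (A : ℕ → ℝ) (hA : ∀ n, A n = α ^ r n + α ^ (2 * r n)) :
    (∀ᶠ n : ℕ in atTop,
      ∃ T : ℤ,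
        (T : ℝ) = α ^ r n + α ^ (2 * r n) + ((t : ℝ) - α) ^ r n + ((t : ℝ) - α) ^ (2 * r n) ∧
        cfa (A n) 0 = T - 1 ∧
        (∀ j : ℕ, cfa (A n) (4 * j + 1) = 1 ∧
          cfa (A n) (4 * j + 2) = ⌊α ^ r n⌋ - 2 ∧
          cfa (A n) (4 * j + 3) = 1 ∧
          cfa (A n) (4 * j + 4) = T - 2) ∧
        periodLength (A n) = 4) ∧
    ∃ B : ℕ, ∀ n : ℕ, periodLength (A n) ≤ B := by
  have hnorm : (α * (t - α)) ^ 2 = 1 := by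
    rw [show α * (t - α) = e by linear_combination -hunit]
    rcases he with rfl | rfl <;> norm_num
  have hlarge : ∀ᶠ n in atTop, 3 ≤ α ^ r n :=
    ((tendsto_pow_atTop_atTop_of_one_lt hα1).comp hrinf).eventually_ge_atTop 3
  refine (fun hmain => ⟨hmain, ?bounded⟩) ?_
  case bounded =>
    obtain ⟨B, hB⟩ := (isBoundedUnder_of_eventually_le
      (Eventually.mono hmain fun n ⟨_, _, _, _, hper⟩ => hper.le)).bddAbove_range
    exact ⟨B, fun n => hB ⟨n, rfl⟩⟩
  filter_upwards [hlarge] with n hβ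
  have hconj : (t - α) ^ r n = (α ^ r n)⁻¹ := pow_eq_inv_pow_of_sq_mul_eq_one hnorm (heven n)
  obtain ⟨s, hs⟩ := exists_int_eq_pow_add_conj_pow hunit (r n)
  rw [hconj] at hs
  have hAn : A n = α ^ r n + (α ^ r n) ^ 2 := by rw [hA, mul_comm, pow_mul]
  obtain ⟨h0, hcfa⟩ := cfa_add_sq hβ hs
  refine ⟨s ^ 2 + s - 2, ?_, ?_, fun j => ?_, ?_⟩
  · rw [mul_comm, pow_mul, pow_mul, hconj]
    push_cast; rw [hs]; field_simp; ring
  · rw [hAn, h0]; ring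
  · rw [hAn, floor_eq_sub_one_of_eq_add_inv (by linarith) hs]
    obtain ⟨h1, h2, h3, h4⟩ := hcfa j
    exact ⟨h1, h2.trans (by ring), h3, h4.trans (by ring)⟩
  · rw [hAn, periodLength_add_sq hβ hs]

/-- let `α > 1` be a quadratic irrational unit (so `α² = tα - e` with `e = ±1`,
with conjugate `α' = t - α`), and `A_n = α^(r n) + α^(2 r n)` with `r n` even and
`r n → ∞`.  Then for all large `n` the continued fraction of `A_n` is
`[tr(A_n) - 1; 1, ⌊α^(r n)⌋ - 2, 1, tr(A_n) - 2, 1, ⌊α^(r n)⌋ - 2, …]`, the period length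
is `4`, and in particular the period lengths are bounded. -/
theorem stmt_12 (α : ℝ) (hα1 : 1 < α) (hirr : Irrational α)
    (t e : ℤ) (he : e = 1 ∨ e = -1) (hunit : α ^ 2 = (t : ℝ) * α - (e : ℝ))
    (r : ℕ → ℕ) (heven : ∀ n, Even (r n)) (hrpos : ∀ n, 0 < r n)
    (hrinf : Tendsto r atTop atTop)
    (A : ℕ → ℝ) (hA : ∀ n, A n = α ^ r n + α ^ (2 * r n)) :
    (∀ᶠ n : ℕ in atTop,
      ∃ T : ℤ,
        (T : ℝ) = α ^ r n + α ^ (2 * r n) + ((t : ℝ) - α) ^ r n + ((t : ℝ) - α) ^ (2 * r n) ∧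
        cfa (A n) 0 = T - 1 ∧
        (∀ j : ℕ, cfa (A n) (4 * j + 1) = 1 ∧
          cfa (A n) (4 * j + 2) = ⌊α ^ r n⌋ - 2 ∧
          cfa (A n) (4 * j + 3) = 1 ∧
          cfa (A n) (4 * j + 4) = T - 2) ∧
        periodLength (A n) = 4) ∧
    ∃ B : ℕ, ∀ n : ℕ, periodLength (A n) ≤ B :=
  stmt_12_general α hα1 t e he hunit r heven hrinf A hA
end

section
/- Let R be a finite set of distinct nonzero complex algebraic numbers and, for each α ∈ R, let p_α ∈ ℂ[X] be a nonzero polynomial (so that B_n = Σ_{α∈R} p_α(n)α^n is a linear recurrence sequence in power sum form). Let d be a positive integer and α_0 ∈ R. Then there exists an integer j with 0 ≤ j < d such that the polynomial Σ_{α∈R, α^d = α_0^d} p_α(dX + j)·α^j ∈ ℂ[X] is nonzero; equivalently, α_0^d occurs as a root of the subsequence (B_{dn+j})_n for at least one j ∈ {0, …, d−1}. -/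
open Polynomial Finset

/-!
If every coefficient polynomial vanished, undoing the nondegenerate affine substitution
`X ↦ dX + j` would give `∑_{α ∈ S} α^j p_α = 0` for all `j < d`, where
`S = {α ∈ R | α^d = α₀^d}` consists of at most `d` roots of `X^d - α₀^d`. This is a Vandermonde
system with distinct nodes, so `p_{α₀} = 0`: pairing it with `∏_{β ∈ S \ {α₀}} (X - β)`, a
polynomial of degree `< d` vanishing on `S` exactly away from `α₀`, isolates the `α₀` term.
-/

theorem Polynomial.comp_eq_zero_iff_of_natDegree_ne_zero {R : Type*} [Semiring R]
    [NoZeroDivisors R] {p q : R[X]} (hq : q.natDegree ≠ 0) : p.comp q = 0 ↔ p = 0 := by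
  refine ⟨fun h => (comp_eq_zero_iff.mp h).resolve_right fun ⟨_, hqC⟩ => hq ?_,
    fun h => by rw [h, zero_comp]⟩
  rw [hqC, natDegree_C]

theorem Polynomial.sum_eval_smul_eq_zero_of_forall_sum_pow_smul_eq_zero {K M : Type*} [Field K]
    [AddCommGroup M] [Module K M] {S : Finset K} {v : K → M} {d : ℕ}
    (h : ∀ j < d, ∑ α ∈ S, α ^ j • v α = 0) {f : K[X]} (hf : f.natDegree < d) :
    ∑ α ∈ S, f.eval α • v α = 0 := by
  simp_rw [eval_eq_sum_range' hf, sum_smul, mul_smul]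
  rw [sum_comm]
  exact sum_eq_zero fun j hj => by rw [← smul_sum, h j (mem_range.mp hj), smul_zero]

theorem Finset.eq_zero_of_forall_sum_pow_smul_eq_zero {K M : Type*} [Field K] [DecidableEq K]
    [AddCommGroup M] [Module K M] {S : Finset K} {v : K → M} {d : ℕ} (hS : #S ≤ d)
    (h : ∀ j < d, ∑ α ∈ S, α ^ j • v α = 0) {α₀ : K} (hα₀ : α₀ ∈ S) : v α₀ = 0 := by
  set f : K[X] := ∏ β ∈ S.erase α₀, (X - C β)
  have hf : f.natDegree < d := by
    rw [natDegree_prod_of_monic _ _ fun β _ => monic_X_sub_C β]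
    simp only [natDegree_X_sub_C, sum_const, smul_eq_mul, mul_one, card_erase_of_mem hα₀]
    have := card_pos.mpr ⟨α₀, hα₀⟩
    omega
  have hsum := sum_eval_smul_eq_zero_of_forall_sum_pow_smul_eq_zero h hf
  rw [sum_eq_single_of_mem α₀ hα₀ fun α hα hne => by
    rw [eval_prod, prod_eq_zero (mem_erase.mpr ⟨hne, hα⟩) (by simp), zero_smul]] at hsum
  refine (smul_eq_zero.mp hsum).resolve_left ?_
  rw [eval_prod]
  refine prod_ne_zero_iff.mpr fun β hβ => ?_
  simpa [sub_eq_zero, eq_comm] using (mem_erase.mp hβ).1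

theorem Finset.card_le_of_forall_pow_eq {K : Type*} [Field K] {S : Finset K} {d : ℕ} (hd : 0 < d)
    {a : K} (hS : ∀ α ∈ S, α ^ d = a) : #S ≤ d := by
  classical
  calc #S ≤ #(nthRootsFinset d a) :=
        card_le_card fun α hα => (mem_nthRootsFinset hd a).mpr (hS α hα)
    _ ≤ d := by
        rw [nthRootsFinset_def]
        exact (Multiset.toFinset_card_le _).trans (card_nthRoots d a)

theorem stmt_17_general (R : Finset ℂ)
    (p : ℂ → Polynomial ℂ) (hp : ∀ α ∈ R, p α ≠ 0)
    (d : ℕ) (hd : 0 < d) (α₀ : ℂ) (hα₀ : α₀ ∈ R) :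
    ∃ j : ℕ, j < d ∧
      (∑ α ∈ R.filter (fun α : ℂ => α ^ d = α₀ ^ d),
        (p α).comp (C (d : ℂ) * X + C (j : ℂ)) * C (α ^ j)) ≠ 0 := by
  by_contra! hcon
  set S := R.filter fun α : ℂ => α ^ d = α₀ ^ d
  have hpow : ∀ j < d, ∑ α ∈ S, α ^ j • p α = 0 := fun j hj => by
    have hL : (C (d : ℂ) * X + C (j : ℂ)).natDegree ≠ 0 := by
      rw [natDegree_linear (Nat.cast_ne_zero.mpr hd.ne')]; exact one_ne_zero
    rw [← comp_eq_zero_iff_of_natDegree_ne_zero hL, ← hcon j hj, ← coe_compRingHom_apply, map_sum]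
    simp only [coe_compRingHom_apply, smul_eq_C_mul, mul_comp, C_comp, mul_comm]
  have hcard : #S ≤ d := card_le_of_forall_pow_eq hd fun α hα => (mem_filter.mp hα).2
  exact hp α₀ hα₀ <| eq_zero_of_forall_sum_pow_smul_eq_zero hcard hpow (mem_filter.mpr ⟨hα₀, rfl⟩)

/-- if `B_n = Σ_{α ∈ R} p_α(n) α^n` is a linear recurrence in power sum form
(with `R` a finite set of distinct nonzero algebraic numbers and `p_α` nonzero polynomials),
`d` a positive integer and `α₀ ∈ R`, then for some `0 ≤ j < d` the coefficient polynomial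
`Σ_{α ∈ R, α^d = α₀^d} p_α(dX + j) α^j` of `(α₀^d)^n` in the power sum form of the
subsequence `(B_{dn+j})_n` is nonzero, i.e. `α₀^d` is a root of `(B_{dn+j})_n`. -/
theorem stmt_17 (R : Finset ℂ) (hR0 : (0 : ℂ) ∉ R)
    (halg : ∀ α ∈ R, IsAlgebraic ℚ α)
    (p : ℂ → Polynomial ℂ) (hp : ∀ α ∈ R, p α ≠ 0)
    (d : ℕ) (hd : 0 < d) (α₀ : ℂ) (hα₀ : α₀ ∈ R) :
    ∃ j : ℕ, j < d ∧
      (∑ α ∈ R.filter (fun α : ℂ => α ^ d = α₀ ^ d),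
        (p α).comp (C (d : ℂ) * X + C (j : ℂ)) * C (α ^ j)) ≠ 0 :=
  stmt_17_general R p hp d hd α₀ hα₀
end
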